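/- arXiv:1810.11214 — 2 statements merged into one kernel-verified Lean document; each statement's English description precedes it below -/
import Mathlib

section
/- With the hypotheses of the previous statement (φ with m-controllability growth, F with m-growth), the normalized family (k_n/√(1+|2πn/L|^{2m}))_{n∈ℤ} is complete in H^m_{per}: if f ∈ H^m_{per} satisfies ⟨f, k_n⟩_m = 0 for all n ∈ ℤ, then f = 0. -/
/-!
Put `g p = (1 + |2πp/L|^(2m)) f p conj (φ p)`, an `ℓ²` sequence by the upper bound on `φ`.
Dividing out `F (-n) ≠ 0`, the orthogonality relations say `∑ p, g p / (λ - 2πi(n+p)/L) = 0`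
for every `n`. Since `1 / (λ + 2πiq/L)` is, up to a constant, the `q`-th Fourier coefficient of
the `L`-periodic function `E` equal to `exp (-λx)` on `[0, L)`, these sums are the Fourier
coefficients of `E * G`, where `G ∈ L²(ℝ/Lℤ)` has Fourier coefficients `g`. So `E * G = 0`,
hence `G = 0` as `E` does not vanish, and then `f = 0` as `φ` does not vanish.
-/

open Complex Real MeasureTheory Filter ENNReal ComplexConjugate

section FourierProduct

variable {T : ℝ} [Fact (0 < T)]

theorem eq_zero_of_fourierCoeff_eq_zero (U : Lp ℂ 2 (AddCircle.haarAddCircle (T := T)))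
    (h : ∀ n, fourierCoeff U n = 0) : U = 0 :=
  fourierBasis.repr.map_eq_zero_iff.mp <| lp.ext <| funext fun n => by
    rw [fourierBasis_repr, h]; rfl

theorem eq_zero_of_fourierCoeff_mul_eq_zero {E : AddCircle T → ℂ}
    (hE : MemLp E ∞ AddCircle.haarAddCircle) (hE0 : ∀ᵐ z ∂AddCircle.haarAddCircle, E z ≠ 0)
    (G : Lp ℂ 2 (AddCircle.haarAddCircle (T := T)))
    (h : ∀ n, fourierCoeff (fun z => E z * G z) n = 0) : G = 0 := by
  have hEG : MemLp (fun z => E z * G z) 2 AddCircle.haarAddCircle := (Lp.memLp G).mul' hE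
  have hU : hEG.toLp _ = 0 := eq_zero_of_fourierCoeff_eq_zero _ fun n => by
    rw [fourierCoeff_congr_ae hEG.coeFn_toLp, h]
  rw [Lp.eq_zero_iff_ae_eq_zero]
  filter_upwards [hEG.coeFn_toLp, Lp.eq_zero_iff_ae_eq_zero.mp hU, hE0] with z hz hz0 hEz
  exact (mul_eq_zero.mp (hz.symm.trans hz0)).resolve_left hEz

theorem hasSum_fourierCoeff_mul {E : AddCircle T → ℂ} (hE : MemLp E 2 AddCircle.haarAddCircle)
    (G : Lp ℂ 2 (AddCircle.haarAddCircle (T := T))) (n : ℤ) :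
    HasSum (fun p => fourierCoeff G p * fourierCoeff E (n - p))
      (fourierCoeff (fun z => E z * G z) n) := by
  set W : AddCircle T → ℂ := fun z => conj (fourier (-n) z * E z)
  have hW : MemLp W 2 AddCircle.haarAddCircle :=
    hE.of_le (continuous_conj.comp_aestronglyMeasurable
      ((map_continuous _).aestronglyMeasurable.mul hE.1))
      (Eventually.of_forall fun z => by simp [W, Circle.norm_coe])
  have hinner : ∀ u : Lp ℂ 2 (AddCircle.haarAddCircle (T := T)),
      inner ℂ (hW.toLp W) u = ∫ z, fourier (-n) z * E z * u z ∂AddCircle.haarAddCircle := by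
    intro u
    rw [L2.inner_def]
    refine integral_congr_ae ?_
    filter_upwards [hW.coeFn_toLp] with z hz
    rw [RCLike.inner_apply, hz]
    simp only [W, conj_conj]
    ring
  have hbasis : ∀ p, inner ℂ (hW.toLp W) (fourierLp 2 p) = fourierCoeff E (n - p) := by
    intro p
    rw [hinner, fourierCoeff]
    refine integral_congr_ae ?_
    filter_upwards [coeFn_fourierLp 2 p] with z hz
    rw [hz, smul_eq_mul, show -(n - p) = -n + p by ring, fourier_add]
    ring
  have hG : inner ℂ (hW.toLp W) G = fourierCoeff (fun z => E z * G z) n := by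
    simp only [hinner, fourierCoeff, smul_eq_mul, mul_assoc]
  rw [← hG]
  simpa [fourierBasis_repr, inner_smul_right, hbasis] using
    (innerSL ℂ (hW.toLp W)).hasSum (fourierBasis.hasSum_repr G)

end FourierProduct

/-- On `[0, T)` this is `Λ₀^λ` up to the constant factor `√T / (1 - exp (-λT))`. -/
noncomputable def periodizedExp (T : ℝ) [Fact (0 < T)] (lam : ℝ) : AddCircle T → ℂ :=
  AddCircle.liftIco T 0 fun x => cexp (-lam * x)

section PeriodizedExp

variable {T : ℝ} [Fact (0 < T)] (lam : ℝ)

theorem periodizedExp_ne_zero (z : AddCircle T) : periodizedExp T lam z ≠ 0 :=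
  Complex.exp_ne_zero _

theorem norm_periodizedExp_le (z : AddCircle T) :
    ‖periodizedExp T lam z‖ ≤ Real.exp (|lam| * T) := by
  have hx := (AddCircle.equivIco T 0 z).2
  change ‖cexp (-lam * (AddCircle.equivIco T 0 z : ℝ))‖ ≤ _
  generalize (AddCircle.equivIco T 0 z : ℝ) = x at hx
  rw [zero_add] at hx
  rw [norm_exp, Real.exp_le_exp]
  norm_cast
  nlinarith [neg_abs_le lam, abs_nonneg lam, hx.1, hx.2]

theorem measurable_periodizedExp : Measurable (periodizedExp T lam) :=
  (by fun_prop : Continuous fun x : Set.Ico (0 : ℝ) (0 + T) => cexp (-lam * x)).measurable.comp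
    (AddCircle.measurableEquivIco T 0).measurable

theorem memLp_top_periodizedExp : MemLp (periodizedExp T lam) ∞ AddCircle.haarAddCircle :=
  memLp_top_of_bound (measurable_periodizedExp lam).aestronglyMeasurable _
    (Eventually.of_forall (norm_periodizedExp_le lam))

theorem fourierCoeff_periodizedExp {lam : ℝ} (hlam : lam ≠ 0) (q : ℤ) :
    fourierCoeff (periodizedExp T lam) q =
      (1 - cexp (-lam * T)) / (T * (lam + 2 * π * I / T * q)) := by
  set c : ℂ := -(lam + 2 * π * I / T * q)
  have hc : c ≠ 0 := fun h => hlam <| by simpa [c] using congrArg re h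
  have hT : (T : ℂ) ≠ 0 := by exact_mod_cast (Fact.out : 0 < T).ne'
  have hint : Set.EqOn (fun x : ℝ => fourier (T := 0 + T - 0) (-q) x • cexp (-lam * x))
      (fun x : ℝ => cexp (c * x)) (Set.uIcc 0 (0 + T)) := by
    intro x _
    simp only [fourier_coe_apply, smul_eq_mul, ← Complex.exp_add, c]
    congr 1
    simp only [zero_add, sub_zero]
    push_cast
    field_simp
    ring
  rw [periodizedExp, fourierCoeff_liftIco_eq, fourierCoeffOn_eq_integral,
    intervalIntegral.integral_congr hint, integral_exp_mul_complex hc]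
  have hcT : cexp (c * (0 + T : ℝ)) = cexp (-lam * T) := by
    have hcT' : c * T = -lam * T + (-q : ℤ) * (2 * π * I) := by
      simp only [c]; push_cast; field_simp; ring
    rw [zero_add, hcT', Complex.exp_add, Complex.exp_int_mul_two_pi_mul_I, mul_one]
  rw [hcT, Complex.ofReal_zero, mul_zero, Complex.exp_zero, zero_add, sub_zero, Complex.real_smul]
  simp only [c]
  push_cast
  field_simp
  ring

end PeriodizedExp

theorem memℓp_two_of_summable_sq {ι : Type*} {g : ι → ℂ} (hg : Summable fun i => ‖g i‖ ^ 2) :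
    Memℓp g 2 :=
  memℓp_gen <| by simpa only [ENNReal.toReal_ofNat, Real.rpow_two] using hg

theorem eq_zero_of_forall_tsum_div_eq_zero {L lam : ℝ} (hL : 0 < L) (hlam : lam ≠ 0) {g : ℤ → ℂ}
    (hg : Memℓp g 2)
    (h : ∀ n : ℤ, ∑' p : ℤ, g p / (lam - 2 * π * I / L * (n + p)) = 0) : g = 0 := by
  have : Fact (0 < L) := ⟨hL⟩
  set G := (fourierBasis (T := L)).repr.symm ⟨g, hg⟩
  have hGg : ∀ p, fourierCoeff G p = g p := fun p => by
    rw [← fourierBasis_repr, LinearIsometryEquiv.apply_symm_apply]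
  have hE := memLp_top_periodizedExp (T := L) lam
  suffices G = 0 by
    have h0 : (⟨g, hg⟩ : lp (fun _ : ℤ => ℂ) 2) = 0 := by simpa [G] using this
    exact congrArg Subtype.val h0
  refine eq_zero_of_fourierCoeff_mul_eq_zero hE (ae_of_all _ (periodizedExp_ne_zero lam)) G
    fun n => ?_
  rw [← (hasSum_fourierCoeff_mul (hE.mono_exponent le_top) G n).tsum_eq]
  calc ∑' p, fourierCoeff G p * fourierCoeff (periodizedExp L lam) (n - p)
      = ∑' p, (1 - cexp (-lam * L)) / L * (g p / (lam - 2 * π * I / L * ((-n : ℤ) + p))) := by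
        refine tsum_congr fun p => ?_
        rw [hGg, fourierCoeff_periodizedExp hlam, show (lam : ℂ) - 2 * π * I / L * ((-n : ℤ) + p)
          = lam + 2 * π * I / L * ((n - p : ℤ) : ℂ) by push_cast; ring]
        simp only [div_eq_mul_inv, mul_inv]
        ring
    _ = 0 := by rw [tsum_mul_left, h, mul_zero]

theorem memℓp_two_weight_mul_mul {ι : Type*} {w : ι → ℝ} {C : ℝ} {f ψ : ι → ℂ}
    (hw : ∀ i, 0 < w i) (hψ : ∀ i, ‖ψ i‖ ≤ C / √(w i))
    (hf : Summable fun i => w i * ‖f i‖ ^ 2) :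
    Memℓp (fun i => (w i : ℂ) * f i * ψ i) 2 := by
  refine memℓp_two_of_summable_sq <|
    Summable.of_nonneg_of_le (fun i => by positivity) (fun i => ?_) (hf.mul_left (C ^ 2))
  have hψ2 : w i * ‖ψ i‖ ^ 2 ≤ C ^ 2 := by
    have := pow_le_pow_left₀ (norm_nonneg _) (hψ i) 2
    rwa [div_pow, sq_sqrt (hw i).le, le_div_iff₀ (hw i), mul_comm] at this
  calc ‖(w i : ℂ) * f i * ψ i‖ ^ 2 = (w i * ‖ψ i‖ ^ 2) * (w i * ‖f i‖ ^ 2) := by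
        rw [norm_mul, norm_mul, norm_real, Real.norm_of_nonneg (hw i).le]; ring
    _ ≤ C ^ 2 * (w i * ‖f i‖ ^ 2) :=
        mul_le_mul_of_nonneg_right hψ2 (mul_nonneg (hw i).le (sq_nonneg _))

theorem stmt_6_general (L lam c C c₁ c₂ : ℝ) (m : ℕ)
    (hL : 0 < L) (hlam : 0 < lam) (hc : 0 < c) (hc₁ : 0 < c₁)
    (φ F : ℤ → ℂ)
    (hφ : ∀ n : ℤ,
      c / Real.sqrt (1 + |2 * Real.pi * (n : ℝ) / L| ^ (2 * m)) ≤ ‖φ n‖ ∧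
      ‖φ n‖ ≤ C / Real.sqrt (1 + |2 * Real.pi * (n : ℝ) / L| ^ (2 * m)))
    (hF : ∀ n : ℤ,
      c₁ * Real.sqrt (1 + |2 * Real.pi * (n : ℝ) / L| ^ (2 * m)) ≤ ‖F n‖ ∧
      ‖F n‖ ≤ c₂ * Real.sqrt (1 + |2 * Real.pi * (n : ℝ) / L| ^ (2 * m)))
    (f : ℤ → ℂ)
    (hf : Summable fun p : ℤ =>
      (1 + |2 * Real.pi * (p : ℝ) / L| ^ (2 * m)) * ‖f p‖ ^ 2)
    (horth : ∀ n : ℤ,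
      (∑' p : ℤ, ((1 + |2 * Real.pi * (p : ℝ) / L| ^ (2 * m) : ℝ) : ℂ) *
        (f p * (starRingEnd ℂ)
          (-(starRingEnd ℂ) (F (-n)) * φ p /
            ((lam : ℂ) + (2 * Real.pi * Complex.I / L) * (n + p))))) = 0) :
    f = 0 := by
  set w : ℤ → ℝ := fun p => 1 + |2 * π * (p : ℝ) / L| ^ (2 * m)
  have hw : ∀ p, 0 < w p := fun p => by positivity
  have hφ0 : ∀ p, φ p ≠ 0 := fun p =>
    norm_pos_iff.mp ((div_pos hc (sqrt_pos.2 (hw p))).trans_le (hφ p).1)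
  have hF0 : ∀ n, F n ≠ 0 := fun n =>
    norm_pos_iff.mp ((mul_pos hc₁ (sqrt_pos.2 (hw n))).trans_le (hF n).1)
  set g : ℤ → ℂ := fun p => (w p : ℂ) * f p * conj (φ p)
  have hg : Memℓp g 2 :=
    memℓp_two_weight_mul_mul hw (fun p => by simpa using (hφ p).2) hf
  have hg0 : g = 0 := eq_zero_of_forall_tsum_div_eq_zero hL hlam.ne' hg fun n => by
    have hterm : ∀ p : ℤ, (w p : ℂ) * (f p * conj (-conj (F (-n)) * φ p /
        (lam + 2 * π * I / L * (n + p)))) = -F (-n) * (g p / (lam - 2 * π * I / L * (n + p))) :=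
      fun p => by simp [g, map_div₀, map_ofNat]; ring
    have := horth n
    rw [tsum_congr hterm, tsum_mul_left] at this
    exact (mul_eq_zero.mp this).resolve_left (neg_ne_zero.mpr (hF0 (-n)))
  funext p
  simpa [g, hφ0 p, (hw p).ne'] using congrFun hg0 p

/-- completeness of the normalized kernel family in `H^m_{per}`, expressed on
Fourier coefficients: if `f ∈ H^m_{per}` is `H^m`-orthogonal to every
`k_n = -conj(F_{-n}) Λ_n^λ ⋆ φ`, then `f = 0`. -/
theorem stmt_6 (L lam c C c₁ c₂ : ℝ) (m : ℕ) (hm : 1 ≤ m)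
    (hL : 0 < L) (hlam : 0 < lam) (hc : 0 < c) (hc₁ : 0 < c₁)
    (φ F : ℤ → ℂ)
    (hφ : ∀ n : ℤ,
      c / Real.sqrt (1 + |2 * Real.pi * (n : ℝ) / L| ^ (2 * m)) ≤ ‖φ n‖ ∧
      ‖φ n‖ ≤ C / Real.sqrt (1 + |2 * Real.pi * (n : ℝ) / L| ^ (2 * m)))
    (hF : ∀ n : ℤ,
      c₁ * Real.sqrt (1 + |2 * Real.pi * (n : ℝ) / L| ^ (2 * m)) ≤ ‖F n‖ ∧
      ‖F n‖ ≤ c₂ * Real.sqrt (1 + |2 * Real.pi * (n : ℝ) / L| ^ (2 * m)))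
    (f : ℤ → ℂ)
    (hf : Summable fun p : ℤ =>
      (1 + |2 * Real.pi * (p : ℝ) / L| ^ (2 * m)) * ‖f p‖ ^ 2)
    (horth : ∀ n : ℤ,
      (∑' p : ℤ, ((1 + |2 * Real.pi * (p : ℝ) / L| ^ (2 * m) : ℝ) : ℂ) *
        (f p * (starRingEnd ℂ)
          (-(starRingEnd ℂ) (F (-n)) * φ p /
            ((lam : ℂ) + (2 * Real.pi * Complex.I / L) * (n + p))))) = 0) :
    f = 0 :=
  stmt_6_general L lam c C c₁ c₂ m hL hlam hc hc₁ φ F hφ hF f hf horth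
end

section
/- Let m ≥ 0, −m ≤ σ < 1/2, and let (G_n)_{n∈ℤ} satisfy c√(1+|2πn/L|^{2m}) ≤ |G_n| for all n with c > 0. Then the linear form α ↦ Σ G_n α_n is not bounded on H^{m+σ}_{per}: there exists a sequence (γ^{(N)}) in H^{m+s}_{per} (for any fixed s > 1/2) with ‖γ^{(N)}‖_{m+σ} > 0 and |Σ_n G_n γ^{(N)}_n| / ‖γ^{(N)}‖_{m+σ} → ∞ as N → ∞. -/
/-!
Fix `τ = max σ 0` and `u` with `τ + 1/2 < u < 1`, and let `γ^{(N)}_n = n^{-u} / G_n` for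
`1 ≤ n ≤ N + 1` and `0` otherwise. Being finitely supported, `γ^{(N)}` lies in every `H^r_per`.
The pairing is `∑ G_n γ^{(N)}_n = ∑_{n ≤ N+1} n^{-u} ≥ (N + 1)^{1-u} → ∞`. On the other hand
`|G_n|² ≥ c² w_m(n)` and `w_{m+σ}(n) ≤ C w_m(n) n^{2τ}` (as `m + σ ≥ 0`) bound `‖γ^{(N)}‖²_{m+σ}`
by `C c⁻² ∑ n^{2τ-2u}`, a convergent series independent of `N`.
-/

open Complex Real Filter

lemma one_add_rpow_le_of_le_add {x a b t : ℝ} (hx : 0 ≤ x) (ha : 0 ≤ a) (hab : a ≤ b + t) :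
    1 + x ^ a ≤ 2 * ((1 + x ^ b) * (1 + x ^ t)) := by
  have hb : 0 ≤ x ^ b := rpow_nonneg hx b
  have ht : 0 ≤ x ^ t := rpow_nonneg hx t
  rcases le_total x 1 with hx1 | hx1
  · have : x ^ a ≤ 1 := rpow_le_one hx hx1 ha
    nlinarith
  · have : x ^ a ≤ x ^ b * x ^ t := by
      rw [← rpow_add (by linarith)]
      exact rpow_le_rpow_of_exponent_le hx1 hab
    nlinarith

lemma one_add_mul_rpow_le {κ y t : ℝ} (hκ : 0 ≤ κ) (hy : 1 ≤ y) (ht : 0 ≤ t) :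
    1 + (κ * y) ^ t ≤ (1 + κ ^ t) * y ^ t := by
  rw [mul_rpow hκ (by linarith), add_mul, one_mul]
  gcongr
  exact one_le_rpow hy ht

lemma rpow_one_sub_le_sum_Icc_rpow_neg {u : ℝ} (hu : 0 ≤ u) (N : ℕ) :
    ((N : ℝ) + 1) ^ (1 - u) ≤ ∑ n ∈ Finset.Icc (1 : ℤ) (N + 1), (n : ℝ) ^ (-u) := by
  have hcard : (Finset.Icc (1 : ℤ) (N + 1)).card = N + 1 := by
    rw [Int.card_Icc]; omega
  have hmin : ∀ n ∈ Finset.Icc (1 : ℤ) (N + 1), ((N : ℝ) + 1) ^ (-u) ≤ (n : ℝ) ^ (-u) := by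
    intro n hn
    rw [Finset.mem_Icc] at hn
    exact rpow_le_rpow_of_nonpos (by exact_mod_cast hn.1) (by exact_mod_cast hn.2)
      (by linarith)
  calc ((N : ℝ) + 1) ^ (1 - u) = (N + 1 : ℕ) • ((N : ℝ) + 1) ^ (-u) := by
        rw [sub_eq_add_neg, rpow_add (by positivity), rpow_one, nsmul_eq_mul]
        push_cast; ring
    _ ≤ _ := hcard ▸ Finset.card_nsmul_le_sum _ _ _ hmin

lemma tendsto_div_sqrt_atTop {f g h : ℕ → ℝ} {K : ℝ} (hh : Tendsto h atTop atTop)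
    (hf : ∀ N, 0 ≤ f N) (hhf : ∀ N, h N ≤ f N) (hg : ∀ N, 0 < g N) (hgK : ∀ N, g N ≤ K) :
    Tendsto (fun N => f N / √(g N)) atTop atTop := by
  have hK : 0 < √K := sqrt_pos.2 ((hg 0).trans_le (hgK 0))
  refine tendsto_atTop_mono (fun N => ?_) (hh.atTop_div_const hK)
  exact div_le_div₀ (hf N) (hhf N) (sqrt_pos.2 (hg N)) (sqrt_le_sqrt (hgK N))

noncomputable section

/-- The weight of the `n`-th Fourier coefficient in `‖·‖²` of `H^r_per(0, L)`. -/
def sobolevWeight (L r : ℝ) (n : ℤ) : ℝ := 1 + |2 * π * n / L| ^ (2 * r)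

lemma sobolevWeight_pos (L r : ℝ) (n : ℤ) : 0 < sobolevWeight L r n := by
  unfold sobolevWeight; positivity

lemma sobolevWeight_le {L r ρ τ : ℝ} (hr : 0 ≤ r) (hrρ : r ≤ ρ + τ) (hτ : 0 ≤ τ) {n : ℤ}
    (hn : 1 ≤ n) :
    sobolevWeight L r n ≤
      2 * (1 + |2 * π / L| ^ (2 * τ)) * sobolevWeight L ρ n * (n : ℝ) ^ (2 * τ) := by
  have hn' : (1 : ℝ) ≤ n := by exact_mod_cast hn
  have habs : |2 * π * n / L| = |2 * π / L| * n := by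
    rw [mul_div_right_comm, abs_mul, abs_of_pos (by linarith : (0 : ℝ) < n)]
  calc sobolevWeight L r n
      ≤ 2 * (sobolevWeight L ρ n * (1 + |2 * π * n / L| ^ (2 * τ))) :=
        one_add_rpow_le_of_le_add (abs_nonneg _) (by linarith) (by linarith)
    _ ≤ 2 * (sobolevWeight L ρ n * ((1 + |2 * π / L| ^ (2 * τ)) * (n : ℝ) ^ (2 * τ))) := by
        rw [habs]
        gcongr
        · exact (sobolevWeight_pos L ρ n).le
        · exact one_add_mul_rpow_le (abs_nonneg _) hn' (by linarith)
    _ = _ := by ring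

def testSeq (G : ℤ → ℂ) (u : ℝ) (N : ℕ) : ℤ → ℂ :=
  Set.indicator (Finset.Icc (1 : ℤ) (N + 1)) fun n => (((n : ℝ) ^ (-u) : ℝ) : ℂ) / G n

section testSeq

variable {G : ℤ → ℂ} {u : ℝ} {N : ℕ}

lemma testSeq_of_notMem {n : ℤ} (hn : n ∉ Finset.Icc (1 : ℤ) (N + 1)) : testSeq G u N n = 0 :=
  Set.indicator_of_notMem (by simpa using hn) _

lemma testSeq_of_mem {n : ℤ} (hn : n ∈ Finset.Icc (1 : ℤ) (N + 1)) :
    testSeq G u N n = (((n : ℝ) ^ (-u) : ℝ) : ℂ) / G n :=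
  Set.indicator_of_mem (by simpa using hn) _

lemma summable_mul_norm_testSeq_sq (w : ℤ → ℝ) :
    Summable fun n => w n * ‖testSeq G u N n‖ ^ 2 :=
  summable_of_ne_finset_zero (s := Finset.Icc 1 (N + 1)) fun n hn => by
    simp [testSeq_of_notMem hn]

lemma summable_norm_mul_testSeq : Summable fun n => ‖G n * testSeq G u N n‖ :=
  summable_of_ne_finset_zero (s := Finset.Icc 1 (N + 1)) fun n hn => by
    simp [testSeq_of_notMem hn]

lemma tsum_mul_testSeq (hG : ∀ n, G n ≠ 0) :
    ∑' n, G n * testSeq G u N n =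
      ((∑ n ∈ Finset.Icc (1 : ℤ) (N + 1), (n : ℝ) ^ (-u) : ℝ) : ℂ) := by
  rw [tsum_eq_sum fun n hn => by rw [testSeq_of_notMem hn, mul_zero], ofReal_sum]
  refine Finset.sum_congr rfl fun n hn => ?_
  rw [testSeq_of_mem hn, mul_div_cancel₀ _ (hG n)]

lemma norm_testSeq_of_mem {n : ℤ} (hn : n ∈ Finset.Icc (1 : ℤ) (N + 1)) :
    ‖testSeq G u N n‖ = (n : ℝ) ^ (-u) / ‖G n‖ := by
  have : (0 : ℝ) ≤ n := by exact_mod_cast (zero_le_one.trans (Finset.mem_Icc.1 hn).1)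
  rw [testSeq_of_mem hn, norm_div, norm_real, norm_of_nonneg (rpow_nonneg this _)]

lemma rpow_one_sub_le_norm_tsum_mul_testSeq (hu : 0 ≤ u) (hG : ∀ n, G n ≠ 0) :
    ((N : ℝ) + 1) ^ (1 - u) ≤ ‖∑' n, G n * testSeq G u N n‖ := by
  rw [tsum_mul_testSeq hG, norm_real, norm_of_nonneg (Finset.sum_nonneg fun n hn => ?_)]
  · exact rpow_one_sub_le_sum_Icc_rpow_neg hu N
  · exact rpow_nonneg (by exact_mod_cast zero_le_one.trans (Finset.mem_Icc.1 hn).1) _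

lemma tsum_mul_norm_testSeq_sq_pos {w : ℤ → ℝ} (hw : ∀ n, 0 < w n) (hG : G 1 ≠ 0) :
    0 < ∑' n, w n * ‖testSeq G u N n‖ ^ 2 := by
  refine (summable_mul_norm_testSeq_sq w).tsum_pos (fun n => by have := hw n; positivity) 1 ?_
  rw [norm_testSeq_of_mem (by simp)]
  have := hw 1
  positivity

lemma sobolevWeight_mul_norm_testSeq_sq_le {L r ρ τ c : ℝ} (hr : 0 ≤ r) (hrρ : r ≤ ρ + τ)
    (hτ : 0 ≤ τ) (hc : 0 < c) (hG : ∀ n, c * √(sobolevWeight L ρ n) ≤ ‖G n‖) (n : ℤ) :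
    sobolevWeight L r n * ‖testSeq G u N n‖ ^ 2 ≤
      2 * (1 + |2 * π / L| ^ (2 * τ)) / c ^ 2 * |(n : ℝ)| ^ (-(2 * (u - τ))) := by
  by_cases hn : n ∈ Finset.Icc (1 : ℤ) (N + 1)
  · have hn1 : (1 : ℝ) ≤ n := by exact_mod_cast (Finset.mem_Icc.1 hn).1
    have hn0 : (0 : ℝ) < n := by linarith
    have hwρ := sobolevWeight_pos L ρ n
    have hGsq : c ^ 2 * sobolevWeight L ρ n ≤ ‖G n‖ ^ 2 := by
      simpa [mul_pow, sq_sqrt hwρ.le] using pow_le_pow_left₀ (by positivity) (hG n) 2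
    have hexp : (n : ℝ) ^ (2 * τ) * ((n : ℝ) ^ (-u)) ^ 2 = (n : ℝ) ^ (-(2 * (u - τ))) := by
      rw [← rpow_natCast, ← rpow_mul hn0.le, ← rpow_add hn0]; ring_nf
    rw [norm_testSeq_of_mem hn, abs_of_pos hn0, div_pow, ← hexp]
    calc sobolevWeight L r n * (((n : ℝ) ^ (-u)) ^ 2 / ‖G n‖ ^ 2)
        ≤ 2 * (1 + |2 * π / L| ^ (2 * τ)) * sobolevWeight L ρ n * (n : ℝ) ^ (2 * τ) *
            (((n : ℝ) ^ (-u)) ^ 2 / (c ^ 2 * sobolevWeight L ρ n)) := by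
          gcongr
          exact sobolevWeight_le hr hrρ hτ (Finset.mem_Icc.1 hn).1
      _ = _ := by field_simp
  · rw [testSeq_of_notMem hn]
    rw [norm_zero, zero_pow two_ne_zero, mul_zero]
    positivity

end testSeq

end

theorem stmt_10_general (L m s σ c : ℝ) (hσ₁ : -m ≤ σ) (hσ₂ : σ < 1 / 2)
    (hc : 0 < c) (G : ℤ → ℂ)
    (hG : ∀ n : ℤ, c * Real.sqrt (1 + |2 * Real.pi * (n : ℝ) / L| ^ (2 * m)) ≤ ‖G n‖) :
    ∃ γ : ℕ → ℤ → ℂ,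
      (∀ N : ℕ, Summable fun n : ℤ =>
        (1 + |2 * Real.pi * (n : ℝ) / L| ^ (2 * (m + s))) * ‖γ N n‖ ^ 2) ∧
      (∀ N : ℕ, 0 < Real.sqrt (∑' n : ℤ,
        (1 + |2 * Real.pi * (n : ℝ) / L| ^ (2 * (m + σ))) * ‖γ N n‖ ^ 2)) ∧
      (∀ N : ℕ, Summable fun n : ℤ => ‖G n * γ N n‖) ∧
      Tendsto (fun N : ℕ => ‖∑' n : ℤ, G n * γ N n‖ /
          Real.sqrt (∑' n : ℤ,
            (1 + |2 * Real.pi * (n : ℝ) / L| ^ (2 * (m + σ))) * ‖γ N n‖ ^ 2))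
        atTop atTop := by
  set τ := max σ 0
  set u := τ / 2 + 3 / 4 with hu
  have hτ : 0 ≤ τ := le_max_right _ _
  have hτ' : τ < 1 / 2 := max_lt hσ₂ (by norm_num)
  have hGne : ∀ n, G n ≠ 0 := fun n =>
    norm_pos_iff.1 ((mul_pos hc (sqrt_pos.2 (sobolevWeight_pos L m n))).trans_le (hG n))
  have hbound := fun N => sobolevWeight_mul_norm_testSeq_sq_le (u := u) (N := N)
    (by linarith : 0 ≤ m + σ) (by linarith [le_max_left σ 0]) hτ hc hG
  have hsum := (summable_abs_int_rpow (by linarith : 1 < 2 * (u - τ))).mul_left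
    (2 * (1 + |2 * π / L| ^ (2 * τ)) / c ^ 2)
  have hden_pos := fun N => tsum_mul_norm_testSeq_sq_pos (u := u) (N := N)
    (sobolevWeight_pos L (m + σ)) (hGne 1)
  refine ⟨testSeq G u, fun N => summable_mul_norm_testSeq_sq _, fun N => sqrt_pos.2 (hden_pos N),
    fun N => summable_norm_mul_testSeq, ?_⟩
  refine tendsto_div_sqrt_atTop ?_ (fun N => norm_nonneg _)
    (fun N => rpow_one_sub_le_norm_tsum_mul_testSeq (by linarith) hGne) hden_pos
    (fun N => (summable_mul_norm_testSeq_sq _).tsum_le_tsum (hbound N) hsum)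
  exact (tendsto_rpow_atTop (by linarith)).comp
    (tendsto_atTop_add_const_right atTop 1 tendsto_natCast_atTop_atTop)

/-- a linear form with coefficients bounded below by `m`-growth is not bounded
on `H^{m+σ}_{per}` for `-m ≤ σ < 1/2`: there is a sequence `γ^{(N)}` in `H^{m+s}_{per}`
(for a fixed `s > 1/2`) on which the ratio `|G(γ^{(N)})|/‖γ^{(N)}‖_{m+σ}` blows up. -/
theorem stmt_10 (L m s σ c : ℝ) (hL : 0 < L) (hm : 0 ≤ m) (hσ₁ : -m ≤ σ) (hσ₂ : σ < 1 / 2)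
    (hs : 1 / 2 < s) (hc : 0 < c) (G : ℤ → ℂ)
    (hG : ∀ n : ℤ, c * Real.sqrt (1 + |2 * Real.pi * (n : ℝ) / L| ^ (2 * m)) ≤ ‖G n‖) :
    ∃ γ : ℕ → ℤ → ℂ,
      (∀ N : ℕ, Summable fun n : ℤ =>
        (1 + |2 * Real.pi * (n : ℝ) / L| ^ (2 * (m + s))) * ‖γ N n‖ ^ 2) ∧
      (∀ N : ℕ, 0 < Real.sqrt (∑' n : ℤ,
        (1 + |2 * Real.pi * (n : ℝ) / L| ^ (2 * (m + σ))) * ‖γ N n‖ ^ 2)) ∧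
      (∀ N : ℕ, Summable fun n : ℤ => ‖G n * γ N n‖) ∧
      Tendsto (fun N : ℕ => ‖∑' n : ℤ, G n * γ N n‖ /
          Real.sqrt (∑' n : ℤ,
            (1 + |2 * Real.pi * (n : ℝ) / L| ^ (2 * (m + σ))) * ‖γ N n‖ ^ 2))
        atTop atTop :=
  stmt_10_general L m s σ c hσ₁ hσ₂ hc G hG
end
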